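/- The sesquinormal cdf at parameter ν = 0 is the standard normal cdf, S_0(μ) = Φ(μ), and in the limit of large parameter, lim_{ν→∞} S_ν(√ν · μ) = Φ(μ) for every μ ∈ ℝ. -/

import Mathlib

open Filter MeasureTheory ProbabilityTheory Set
open scoped NNReal

/-- Total variation distance between two measures on ℝ. -/
noncomputable def tvDist (P Q : Measure ℝ) : ℝ :=
  ⨆ s : {s : Set ℝ // MeasurableSet s}, |(P s.1).toReal - (Q s.1).toReal|

/-- The standard normal cdf `Φ`. -/
noncomputable def stdPhi (x : ℝ) : ℝ := (gaussianReal 0 1 (Set.Iic x)).toReal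

/-- The sesquinormal cdf `S_ν(μ)`: the infimum, over cdfs `A` dominating the standard
normal cdf `Φ` pointwise, of the total variation distance between the distribution
with cdf `A` and the normal distribution with mean `μ` and variance `ν`. -/
noncomputable def sesqui (ν : ℝ≥0) (μ : ℝ) : ℝ :=
  sInf {d : ℝ | ∃ A : StieltjesFunction ℝ,
    Tendsto (fun x => A x) atBot (nhds 0) ∧ Tendsto (fun x => A x) atTop (nhds 1) ∧
    (∀ x, stdPhi x ≤ A x) ∧ d = tvDist A.measure (gaussianReal μ ν)}

/-!
Every admissible cdf `A` satisfies `A x - Φ_{m,ν}(x) ≤ T(A, Φ_{m,ν})` (test the set `(-∞, x]`), so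
`S_ν(m) ≥ Φ(x) - Φ_{m,ν}(x)` for every `x`. Conversely `max(Φ, Φ_{m,ν})` is admissible; if
`Φ ≤ Φ_{m,ν}` on `(-∞, c]` its law agrees with `N(m, ν)` there, so `S_ν(m) ≤ 1 - Φ_{m,ν}(c)`.

For `ν = 0` the lower bound with `x ↑ μ` gives `Φ(μ)`, and `max(Φ, 1_{[μ,∞)})` differs from `δ_μ`
only by the mass `Φ(μ)` it puts to the left of `μ`. For `m = √ν μ` we have
`Φ_{m,ν}(x) = Φ(x / √ν - μ)`; taking `x = ν^{1/4}` in the lower bound and the fixed point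
`c = -μ / (1 - ν^{-1/2})` of `x ↦ x / √ν - μ` in the upper bound, both bounds tend to
`1 - Φ(-μ) = Φ(μ)`.
-/

section TotalVariation

variable {P Q : Measure ℝ}

lemma abs_measureReal_sub_le_tvDist [IsFiniteMeasure P] [IsFiniteMeasure Q] {s : Set ℝ}
    (hs : MeasurableSet s) : |P.real s - Q.real s| ≤ tvDist P Q := by
  refine le_ciSup (f := fun s : {s : Set ℝ // MeasurableSet s} => |P.real s.1 - Q.real s.1|)
    ⟨P.real univ + Q.real univ, ?_⟩ ⟨s, hs⟩
  rintro _ ⟨t, rfl⟩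
  have hP := measureReal_mono (μ := P) (subset_univ t.1)
  have hQ := measureReal_mono (μ := Q) (subset_univ t.1)
  rw [abs_sub_le_iff]
  constructor <;> linarith [measureReal_nonneg (μ := P) (s := t.1),
    measureReal_nonneg (μ := Q) (s := t.1)]

lemma tvDist_nonneg [IsFiniteMeasure P] [IsFiniteMeasure Q] : 0 ≤ tvDist P Q :=
  (abs_nonneg _).trans (abs_measureReal_sub_le_tvDist MeasurableSet.empty)

lemma measureReal_sub_le_measureReal_compl_of_restrict_le [IsFiniteMeasure P]
    [IsFiniteMeasure Q] {s t : Set ℝ} (hs : MeasurableSet s) (ht : MeasurableSet t)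
    (hPQ : P.restrict t ≤ Q.restrict t) : P.real s - Q.real s ≤ P.real tᶜ := by
  have hst : P.real (s ∩ t) ≤ Q.real (s ∩ t) := by
    have h := Measure.le_iff'.1 hPQ s
    rw [Measure.restrict_apply hs, Measure.restrict_apply hs] at h
    exact ENNReal.toReal_mono (measure_ne_top _ _) h
  calc P.real s - Q.real s ≤ P.real s - P.real (s ∩ t) := by
        linarith [measureReal_mono (μ := Q) (inter_subset_left : s ∩ t ⊆ s)]
    _ = P.real (s \ t) := by rw [← measureReal_inter_add_sdiff (μ := P) (s := s) ht]; ring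
    _ ≤ P.real tᶜ := measureReal_mono (sdiff_subset_compl s t)

/-- For probability measures `Q s - P s = P sᶜ - Q sᶜ`, so both signs of `P s - Q s` are
bounded by the previous lemma. -/
lemma tvDist_le_measureReal_compl_of_restrict_le [IsProbabilityMeasure P]
    [IsProbabilityMeasure Q] {t : Set ℝ} (ht : MeasurableSet t)
    (hPQ : P.restrict t ≤ Q.restrict t) : tvDist P Q ≤ P.real tᶜ := by
  have : Nonempty {s : Set ℝ // MeasurableSet s} := ⟨⟨∅, .empty⟩⟩
  refine ciSup_le fun ⟨s, hs⟩ => ?_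
  have hpos := measureReal_sub_le_measureReal_compl_of_restrict_le hs ht hPQ
  have hneg := measureReal_sub_le_measureReal_compl_of_restrict_le hs.compl ht hPQ
  rw [probReal_compl_eq_one_sub hs, probReal_compl_eq_one_sub hs] at hneg
  change |P.real s - Q.real s| ≤ _
  exact abs_sub_le_iff.2 ⟨hpos, by linarith⟩

lemma tvDist_le_one_sub_cdf_of_eqOn_Iic [IsProbabilityMeasure P] [IsProbabilityMeasure Q]
    {c : ℝ} (h : ∀ x ≤ c, cdf P x = cdf Q x) : tvDist P Q ≤ 1 - cdf Q c := by
  have hres : P.restrict (Iic c) = Q.restrict (Iic c) := by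
    refine Measure.ext_of_Iic _ _ fun x => ?_
    rw [Measure.restrict_apply measurableSet_Iic, Measure.restrict_apply measurableSet_Iic,
      Iic_inter_Iic, ← ofReal_cdf, ← ofReal_cdf, h _ inf_le_right]
  calc tvDist P Q ≤ P.real (Iic c)ᶜ :=
        tvDist_le_measureReal_compl_of_restrict_le measurableSet_Iic hres.le
    _ = 1 - cdf Q c := by
      rw [probReal_compl_eq_one_sub measurableSet_Iic, ← cdf_eq_real, h c le_rfl]

end TotalVariation

lemma continuous_cdf (P : Measure ℝ) [IsProbabilityMeasure P] [NullSingletonClass P] :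
    Continuous (cdf P) := by
  refine continuous_iff_continuousAt.2 fun x => ?_
  rw [(monotone_cdf P).continuousAt_iff_leftLim_eq_rightLim, (cdf P).rightLim_eq]
  have h : (cdf P).measure {x} = 0 := by rw [measure_cdf, measure_singleton]
  rw [StieltjesFunction.measure_singleton, ENNReal.ofReal_eq_zero] at h
  linarith [(monotone_cdf P).leftLim_le (le_refl x)]

namespace StieltjesFunction

protected def max {R : Type*} [LinearOrder R] [TopologicalSpace R]
    (f g : StieltjesFunction R) : StieltjesFunction R where
  toFun x := max (f x) (g x)
  mono' _ _ hab := max_le_max (f.mono hab) (g.mono hab)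
  right_continuous' x := (f.right_continuous x).max (g.right_continuous x)

end StieltjesFunction

lemma stdPhi_eq_cdf : stdPhi = cdf (gaussianReal 0 1) := by
  ext x
  rw [cdf_eq_real]
  rfl

lemma monotone_stdPhi : Monotone stdPhi :=
  stdPhi_eq_cdf ▸ monotone_cdf _

lemma continuous_stdPhi : Continuous stdPhi := by
  have := nullSingletonClass_gaussianReal (μ := 0) one_ne_zero
  rw [stdPhi_eq_cdf]
  exact continuous_cdf _

lemma stdPhi_neg (x : ℝ) : stdPhi (-x) = 1 - stdPhi x := by
  have := nullSingletonClass_gaussianReal (μ := 0) one_ne_zero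
  have hsymm : gaussianReal 0 1 (Iic (-x)) = gaussianReal 0 1 (Ici x) := by
    conv_lhs => rw [← neg_zero, ← gaussianReal_map_neg]
    rw [Measure.map_apply measurable_neg measurableSet_Iic, neg_preimage, neg_Iic, neg_neg]
  change (gaussianReal 0 1).real (Iic (-x)) = 1 - (gaussianReal 0 1).real (Iic x)
  rw [measureReal_def, hsymm, ← measureReal_def, ← compl_Iio,
    probReal_compl_eq_one_sub measurableSet_Iio, measureReal_congr Iio_ae_eq_Iic]

lemma cdf_gaussianReal {v : ℝ≥0} (hv : v ≠ 0) (m x : ℝ) :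
    cdf (gaussianReal m v) x = stdPhi ((x - m) / √(v : ℝ)) := by
  have hσ : 0 < √(v : ℝ) := Real.sqrt_pos.2 (NNReal.coe_pos.2 (pos_iff_ne_zero.2 hv))
  have hmap : (gaussianReal 0 1).map (fun y => √(v : ℝ) * y + m) = gaussianReal m v := by
    rw [← Function.comp_def (· + m) (√(v : ℝ) * ·),
      ← Measure.map_map (measurable_add_const m) (measurable_const_mul _),
      gaussianReal_map_const_mul, gaussianReal_map_add_const]
    congr 1
    · ring
    · ext
      simp [Real.sq_sqrt v.coe_nonneg]
  rw [cdf_eq_real, ← hmap, map_measureReal_apply (by fun_prop) measurableSet_Iic]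
  congr 1
  ext y
  simp only [mem_preimage, mem_Iic, le_div_iff₀ hσ]
  constructor <;> intro h <;> linarith

lemma cdf_dirac (a x : ℝ) : cdf (Measure.dirac a) x = if a ≤ x then 1 else 0 := by
  rw [cdf_eq_real, measureReal_def, Measure.dirac_apply' _ measurableSet_Iic]
  split_ifs with h <;> simp [h]

section Sesqui

variable {ν : ℝ≥0} {μ : ℝ}

noncomputable def maxPhiCdf (P : Measure ℝ) : StieltjesFunction ℝ :=
  (cdf (gaussianReal 0 1)).max (cdf P)

lemma maxPhiCdf_apply (P : Measure ℝ) (x : ℝ) : maxPhiCdf P x = max (stdPhi x) (cdf P x) := by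
  rw [stdPhi_eq_cdf]
  rfl

lemma tendsto_maxPhiCdf_atBot (P : Measure ℝ) : Tendsto (maxPhiCdf P) atBot (nhds 0) := by
  have h := (tendsto_cdf_atBot (gaussianReal 0 1)).max (tendsto_cdf_atBot P)
  rwa [max_self] at h

lemma tendsto_maxPhiCdf_atTop (P : Measure ℝ) : Tendsto (maxPhiCdf P) atTop (nhds 1) := by
  have h := (tendsto_cdf_atTop (gaussianReal 0 1)).max (tendsto_cdf_atTop P)
  rwa [max_self] at h

instance (P : Measure ℝ) : IsProbabilityMeasure (maxPhiCdf P).measure :=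
  (maxPhiCdf P).isProbabilityMeasure (tendsto_maxPhiCdf_atBot P) (tendsto_maxPhiCdf_atTop P)

lemma cdf_maxPhiCdf_measure (P : Measure ℝ) : cdf (maxPhiCdf P).measure = maxPhiCdf P :=
  cdf_measure_stieltjesFunction _ (tendsto_maxPhiCdf_atBot P) (tendsto_maxPhiCdf_atTop P)

lemma sesqui_le_tvDist_maxPhiCdf :
    sesqui ν μ ≤ tvDist (maxPhiCdf (gaussianReal μ ν)).measure (gaussianReal μ ν) := by
  refine csInf_le ⟨0, ?_⟩ ⟨maxPhiCdf _, tendsto_maxPhiCdf_atBot _, tendsto_maxPhiCdf_atTop _,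
    fun x => (maxPhiCdf_apply _ x).symm ▸ le_max_left _ _, rfl⟩
  rintro _ ⟨A, hA0, hA1, -, rfl⟩
  have := A.isProbabilityMeasure hA0 hA1
  exact tvDist_nonneg

lemma stdPhi_sub_cdf_le_sesqui (x : ℝ) : stdPhi x - cdf (gaussianReal μ ν) x ≤ sesqui ν μ := by
  refine le_csInf ⟨_, cdf (gaussianReal 0 1), tendsto_cdf_atBot _, tendsto_cdf_atTop _,
    fun x => (congrFun stdPhi_eq_cdf x).le, rfl⟩ ?_
  rintro _ ⟨A, hA0, hA1, hA, rfl⟩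
  have := A.isProbabilityMeasure hA0 hA1
  calc stdPhi x - cdf (gaussianReal μ ν) x
      ≤ A.measure.real (Iic x) - (gaussianReal μ ν).real (Iic x) := by
        rw [← cdf_eq_real, ← cdf_eq_real, cdf_measure_stieltjesFunction A hA0 hA1]
        linarith [hA x]
    _ ≤ _ := le_abs_self _
    _ ≤ _ := abs_measureReal_sub_le_tvDist measurableSet_Iic

lemma sesqui_le_one_sub_cdf {c : ℝ} (hc : ∀ x ≤ c, stdPhi x ≤ cdf (gaussianReal μ ν) x) :
    sesqui ν μ ≤ 1 - cdf (gaussianReal μ ν) c :=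
  sesqui_le_tvDist_maxPhiCdf.trans <| tvDist_le_one_sub_cdf_of_eqOn_Iic fun x hx => by
    rw [cdf_maxPhiCdf_measure, maxPhiCdf_apply, max_eq_right (hc x hx)]

lemma stdPhi_le_sesqui_zero : stdPhi μ ≤ sesqui 0 μ := by
  refine le_of_tendsto (continuous_stdPhi.continuousWithinAt (s := Iio μ) (x := μ))
    (eventually_nhdsWithin_of_forall fun x (hx : x < μ) => ?_)
  simpa [cdf_dirac, not_le.2 hx] using stdPhi_sub_cdf_le_sesqui (ν := 0) (μ := μ) x

lemma sesqui_zero_le : sesqui 0 μ ≤ stdPhi μ := by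
  set M := (maxPhiCdf (Measure.dirac μ)).measure
  have hleft : Function.leftLim (maxPhiCdf (Measure.dirac μ)) μ = stdPhi μ := by
    refine leftLim_eq_of_tendsto ((continuous_stdPhi.tendsto μ).mono_left nhdsWithin_le_nhds
      |>.congr' (eventually_nhdsWithin_of_forall fun x (hx : x < μ) => ?_))
    rw [maxPhiCdf_apply, cdf_dirac, if_neg (not_le.2 hx),
      max_eq_left (stdPhi_eq_cdf ▸ cdf_nonneg _ _)]
  have hM : M.real {μ}ᶜ = stdPhi μ := by
    rw [probReal_compl_eq_one_sub (measurableSet_singleton μ), measureReal_def,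
      StieltjesFunction.measure_singleton, hleft, maxPhiCdf_apply, cdf_dirac, if_pos le_rfl,
      max_eq_right (stdPhi_eq_cdf ▸ cdf_le_one _ _), ENNReal.toReal_ofReal]
    · ring
    · linarith [stdPhi_eq_cdf ▸ cdf_le_one (gaussianReal 0 1) μ]
  have hle : M.restrict {μ} ≤ (Measure.dirac μ).restrict {μ} := by
    rw [Measure.restrict_singleton, Measure.restrict_singleton,
      Measure.dirac_apply_of_mem (mem_singleton μ)]
    exact IsOrderedSMul.smul_le_smul_right _ _ prob_le_one _
  calc sesqui 0 μ ≤ tvDist M (Measure.dirac μ) := by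
        simpa using sesqui_le_tvDist_maxPhiCdf (ν := 0) (μ := μ)
    _ ≤ M.real {μ}ᶜ := tvDist_le_measureReal_compl_of_restrict_le (measurableSet_singleton μ) hle
    _ = stdPhi μ := hM

end Sesqui

section LargeVariance

variable {ν : ℝ≥0}

lemma cdf_gaussianReal_sqrt_mul (hν : 0 < √(ν : ℝ)) (μ x : ℝ) :
    cdf (gaussianReal (√(ν : ℝ) * μ) ν) x = stdPhi (x / √(ν : ℝ) - μ) := by
  have hν0 : ν ≠ 0 := by rintro rfl; simp at hν
  rw [cdf_gaussianReal hν0]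
  field_simp

lemma stdPhi_sub_le_sesqui_sqrt_mul (hν : 0 < √(ν : ℝ)) (μ x : ℝ) :
    stdPhi x - stdPhi (x / √(ν : ℝ) - μ) ≤ sesqui ν (√(ν : ℝ) * μ) :=
  cdf_gaussianReal_sqrt_mul hν μ x ▸ stdPhi_sub_cdf_le_sesqui x

lemma sesqui_sqrt_mul_le (hν : 1 < √(ν : ℝ)) (μ : ℝ) :
    sesqui ν (√(ν : ℝ) * μ) ≤ 1 - stdPhi (-μ / (1 - (√(ν : ℝ))⁻¹)) := by
  set σ := √(ν : ℝ)
  set c := -μ / (1 - σ⁻¹)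
  have hσ : 0 < σ := by linarith
  have hk : 0 < 1 - σ⁻¹ := sub_pos.2 (inv_lt_one_of_one_lt₀ hν)
  have hc : c * (1 - σ⁻¹) = -μ := div_mul_cancel₀ _ hk.ne'
  have hcdf := cdf_gaussianReal_sqrt_mul hσ μ
  have hfix : c / σ - μ = c := by linear_combination (-1 : ℝ) * hc
  refine (sesqui_le_one_sub_cdf (c := c) fun x hx => ?_).trans_eq (by rw [hcdf, hfix])
  rw [hcdf]
  refine monotone_stdPhi ?_
  have : x * (1 - σ⁻¹) ≤ -μ := hc ▸ mul_le_mul_of_nonneg_right hx hk.le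
  rw [div_eq_mul_inv]
  linarith

end LargeVariance

theorem tendsto_sesqui_sqrt_mul (μ : ℝ) :
    Tendsto (fun ν : ℝ≥0 => sesqui ν (√(ν : ℝ) * μ)) atTop (nhds (stdPhi μ)) := by
  have hσ : Tendsto (fun ν : ℝ≥0 => √(ν : ℝ)) atTop atTop :=
    Real.tendsto_sqrt_atTop.comp (NNReal.tendsto_coe_atTop.2 tendsto_id)
  have hσ' := Real.tendsto_sqrt_atTop.comp hσ
  have hΦ := continuous_stdPhi.tendsto
  have hlow : Tendsto (fun ν : ℝ≥0 => stdPhi (√√(ν : ℝ)) - stdPhi ((√√(ν : ℝ))⁻¹ - μ)) atTop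
      (nhds (stdPhi μ)) := by
    have h := ((stdPhi_eq_cdf ▸ tendsto_cdf_atTop _).comp hσ').sub
      ((hΦ (0 - μ)).comp ((tendsto_inv_atTop_zero.comp hσ').sub_const μ))
    simpa [stdPhi_neg] using h
  have hup : Tendsto (fun ν : ℝ≥0 => 1 - stdPhi (-μ / (1 - (√(ν : ℝ))⁻¹))) atTop
      (nhds (stdPhi μ)) := by
    have h := ((hΦ (-μ / (1 - 0))).comp (tendsto_const_nhds.div
      ((tendsto_inv_atTop_zero.comp hσ).const_sub 1) (by norm_num))).const_sub 1
    simpa [stdPhi_neg] using h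
  refine tendsto_of_tendsto_of_tendsto_of_le_of_le' hlow hup ?_ ?_
  · filter_upwards [hσ.eventually_gt_atTop 0] with ν hν
    have hx : √√(ν : ℝ) / √(ν : ℝ) = (√√(ν : ℝ))⁻¹ := by
      have hsq := Real.sq_sqrt (Real.sqrt_nonneg (ν : ℝ))
      set y := √√(ν : ℝ)
      rw [← hsq]
      field_simp
    simpa only [hx] using stdPhi_sub_le_sesqui_sqrt_mul hν μ (√√(ν : ℝ))
  · filter_upwards [hσ.eventually_gt_atTop 1] with ν hν using sesqui_sqrt_mul_le hν μ

/-- `S_0(μ) = Φ(μ)` and `lim_{ν→∞} S_ν(√ν·μ) = Φ(μ)`. -/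
theorem sesqui_extreme_cases :
    (∀ μ : ℝ, sesqui 0 μ = stdPhi μ) ∧
    (∀ μ : ℝ, Tendsto (fun ν : ℝ≥0 => sesqui ν (Real.sqrt ν * μ)) atTop (nhds (stdPhi μ))) :=
  ⟨fun _ => sesqui_zero_le.antisymm stdPhi_le_sesqui_zero, tendsto_sesqui_sqrt_mul⟩
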